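/- Every connected critical graph other than K₁ and K₂ is 2-connected. -/

import Mathlib

open SimpleGraph

/-- A set of vertices is independent if no two of its members are adjacent. -/
def IsIndepSet {V : Type*} (G : SimpleGraph V) (s : Set V) : Prop :=
  s.Pairwise fun a b => ¬ G.Adj a b

/-- The independence number of a graph: the maximum size of an independent set. -/
noncomputable def alpha {V : Type*} (G : SimpleGraph V) : ℕ :=
  sSup {n | ∃ s : Finset V, _root_.IsIndepSet G (s : Set V) ∧ s.card = n}

/-- A graph is critical if deleting any edge strictly increases the independence number. -/
def IsCritical {V : Type*} (G : SimpleGraph V) : Prop :=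
  ∀ e ∈ G.edgeSet, alpha G < alpha (G.deleteEdges {e})

/-! If `v` were a cut vertex, let `C` be a component of `G - v` containing a neighbour `u` of `v`,
and `w ∉ C` another neighbour. Criticality yields sets `S`, `T` of size `α + 1`, independent in
`G - vu` and `G - vw` respectively. Exchanging their parts inside `C` produces two independent sets
of `G` of total size at least `|S| + |T| - 1 = 2α + 1`, which is impossible. A connected graph on at
most two vertices is complete, hence `K₁` or `K₂`. -/

open Finset

section

variable {V : Type*} {G : SimpleGraph V}

lemma alpha_eq_indepNum (G : SimpleGraph V) : alpha G = G.indepNum := by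
  simp only [alpha, indepNum, isNIndepSet_iff]
  rfl

lemma SimpleGraph.isIndepSet_union {s t : Set V} (hs : G.IsIndepSet s) (ht : G.IsIndepSet t)
    (hst : ∀ a ∈ s, ∀ b ∈ t, ¬ G.Adj a b) : G.IsIndepSet (s ∪ t) :=
  Set.pairwise_union.2 ⟨hs, ht, fun a ha b hb _ => ⟨hst a ha b hb, fun h => hst a ha b hb h.symm⟩⟩

lemma SimpleGraph.IsIndepSet.eq_of_adj_of_deleteEdges {s : Set V} {e : Sym2 V}
    (hs : (G.deleteEdges {e}).IsIndepSet s) {x y : V} (hx : x ∈ s) (hy : y ∈ s)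
    (hxy : G.Adj x y) : s(x, y) = e := by
  by_contra hne
  exact hs hx hy hxy.ne (deleteEdges_adj.2 ⟨hxy, hne⟩)

lemma SimpleGraph.IsIndepSet.mem_of_deleteEdges_of_indepNum_lt [Finite V] {s : Finset V}
    {e : Sym2 V} (hs : (G.deleteEdges {e}).IsIndepSet s) (hcard : G.indepNum < #s) {z : V}
    (hz : z ∈ e) : z ∈ s := by
  have hnot : ¬ G.IsIndepSet s := fun h => hcard.not_ge h.card_le_indepNum
  obtain ⟨x, hx, y, hy, -, hxy⟩ : ∃ x ∈ (s : Set V), ∃ y ∈ (s : Set V), x ≠ y ∧ G.Adj x y := by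
    simpa [Set.Pairwise] using hnot
  rw [← hs.eq_of_adj_of_deleteEdges hx hy hxy, Sym2.mem_iff] at hz
  rcases hz with rfl | rfl <;> assumption

lemma IsCritical.exists_isIndepSet_deleteEdges (hG : IsCritical G) {u v : V}
    (huv : G.Adj u v) :
    ∃ s : Finset V, G.indepNum < #s ∧ (G.deleteEdges {s(u, v)}).IsIndepSet s := by
  obtain ⟨s, hs⟩ := (G.deleteEdges {s(u, v)}).exists_isNIndepSet_indepNum
  refine ⟨s, ?_, hs.isIndepSet⟩
  simpa only [alpha_eq_indepNum, hs.card_eq] using hG _ huv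

section Exchange

variable {C S T : Finset V} {u v w : V}

lemma isIndepSet_inter_union_sdiff_of_deleteEdges [DecidableEq V]
    (hC : ∀ x ∈ C, ∀ y, G.Adj x y → y ≠ v → y ∈ C) (hvC : v ∉ C) (huC : u ∈ C) (hwC : w ∉ C)
    (hS : (G.deleteEdges {s(v, u)}).IsIndepSet S) (hT : (G.deleteEdges {s(v, w)}).IsIndepSet T)
    (hvT : v ∈ T) :
    G.IsIndepSet ((T ∩ C ∪ S \ C : Finset V) : Set V) := by
  rw [coe_union]
  refine isIndepSet_union ?_ ?_ ?_
  · intro x hx y hy _ hxy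
    simp only [coe_inter, Set.mem_inter_iff, mem_coe] at hx hy
    have := hT.eq_of_adj_of_deleteEdges hx.1 hy.1 hxy
    grind [Sym2.eq_iff]
  · intro x hx y hy _ hxy
    simp only [coe_sdiff, Set.mem_sdiff, mem_coe] at hx hy
    have := hS.eq_of_adj_of_deleteEdges hx.1 hy.1 hxy
    grind [Sym2.eq_iff]
  · intro x hx y hy hxy
    simp only [coe_inter, coe_sdiff, Set.mem_inter_iff, Set.mem_sdiff, mem_coe] at hx hy
    by_cases hyv : y = v
    · subst hyv
      have := hT.eq_of_adj_of_deleteEdges hx.1 hvT hxy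
      grind [Sym2.eq_iff]
    · exact hy.2 (hC x hx.2 y hxy hyv)

lemma isIndepSet_inter_union_erase_sdiff_of_deleteEdges [DecidableEq V]
    (hC : ∀ x ∈ C, ∀ y, G.Adj x y → y ≠ v → y ∈ C) (hvC : v ∉ C)
    (hS : (G.deleteEdges {s(v, u)}).IsIndepSet S) (hT : (G.deleteEdges {s(v, w)}).IsIndepSet T) :
    G.IsIndepSet ((S ∩ C ∪ (T \ C).erase v : Finset V) : Set V) := by
  rw [coe_union]
  refine isIndepSet_union ?_ ?_ ?_
  · intro x hx y hy _ hxy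
    simp only [coe_inter, Set.mem_inter_iff, mem_coe] at hx hy
    have := hS.eq_of_adj_of_deleteEdges hx.1 hy.1 hxy
    grind [Sym2.eq_iff]
  · intro x hx y hy _ hxy
    simp only [coe_erase, coe_sdiff, Set.mem_sdiff, Set.mem_singleton_iff, mem_coe] at hx hy
    have := hT.eq_of_adj_of_deleteEdges hx.1.1 hy.1.1 hxy
    grind [Sym2.eq_iff]
  · intro x hx y hy hxy
    simp only [coe_inter, coe_erase, coe_sdiff, Set.mem_inter_iff, Set.mem_sdiff,
      Set.mem_singleton_iff, mem_coe] at hx hy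
    exact hy.1.2 (hC x hx.2 y hxy hy.2)

lemma card_add_card_le_of_isIndepSet_deleteEdges [Finite V]
    (hC : ∀ x ∈ C, ∀ y, G.Adj x y → y ≠ v → y ∈ C) (hvC : v ∉ C) (huC : u ∈ C) (hwC : w ∉ C)
    (hS : (G.deleteEdges {s(v, u)}).IsIndepSet S) (hT : (G.deleteEdges {s(v, w)}).IsIndepSet T)
    (hvT : v ∈ T) :
    #S + #T ≤ 2 * G.indepNum + 1 := by
  classical
  have hA : #(T ∩ C) + #(S \ C) ≤ G.indepNum := by
    rw [← card_union_of_disjoint (disjoint_sdiff.mono_left inter_subset_right)]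
    exact (isIndepSet_inter_union_sdiff_of_deleteEdges hC hvC huC hwC hS hT hvT).card_le_indepNum
  have hB : #(S ∩ C) + #((T \ C).erase v) ≤ G.indepNum := by
    rw [← card_union_of_disjoint ((disjoint_sdiff.mono_left inter_subset_right).mono_right
      (erase_subset _ _))]
    exact (isIndepSet_inter_union_erase_sdiff_of_deleteEdges hC hvC hS hT).card_le_indepNum
  have := card_inter_add_card_sdiff S C
  have := card_inter_add_card_sdiff T C
  have := pred_card_le_card_erase (s := T \ C) (a := v)
  omega

lemma IsCritical.neighbors_not_separated [Finite V] (hG : IsCritical G)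
    (hC : ∀ x ∈ C, ∀ y, G.Adj x y → y ≠ v → y ∈ C) (hvC : v ∉ C) (huC : u ∈ C) (hwC : w ∉ C)
    (hvu : G.Adj v u) (hvw : G.Adj v w) : False := by
  obtain ⟨S, hScard, hS⟩ := hG.exists_isIndepSet_deleteEdges hvu
  obtain ⟨T, hTcard, hT⟩ := hG.exists_isIndepSet_deleteEdges hvw
  have hvT : v ∈ T := hT.mem_of_deleteEdges_of_indepNum_lt hTcard (Sym2.mem_mk_left v w)
  have := card_add_card_le_of_isIndepSet_deleteEdges hC hvC huC hwC hS hT hvT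
  omega

end Exchange

lemma SimpleGraph.Connected.eq_top_of_card_le_two [Fintype V] (hG : G.Connected)
    (h : Fintype.card V ≤ 2) : G = ⊤ := by
  classical
  ext x y
  refine ⟨Adj.ne, fun hxy => ?_⟩
  obtain ⟨d, -, hd₁, hd₂⟩ := (hG.preconnected x y).some.exists_boundary_dart {x} rfl hxy.symm
  rw [Set.mem_singleton_iff] at hd₁ hd₂
  have hdy : d.snd = y := by
    by_contra hdy
    have : #{x, y, d.snd} = 3 := card_eq_three.2 ⟨x, y, d.snd, hxy, Ne.symm hd₂, Ne.symm hdy, rfl⟩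
    have := card_le_univ ({x, y, d.snd} : Finset V)
    omega
  exact hd₁ ▸ hdy ▸ d.adj

lemma SimpleGraph.Connected.nonempty_iso_top_of_card_eq [Fintype V] {n : ℕ} (hG : G.Connected)
    (hn : Fintype.card V = n) (h2 : n ≤ 2) : Nonempty (G ≃g (⊤ : SimpleGraph (Fin n))) :=
  ⟨hG.eq_top_of_card_le_two (hn ▸ h2) ▸ Iso.completeGraph (Fintype.equivFinOfCardEq hn)⟩

lemma SimpleGraph.Preconnected.exists_adj_of_closed {v : V} {C : Set V} (hG : G.Preconnected)
    (hC : ∀ x ∈ C, ∀ y, G.Adj x y → y ≠ v → y ∈ C) {a b : V} (ha : a ∈ C) (hb : b ∉ C) :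
    ∃ u ∈ C, G.Adj v u := by
  obtain ⟨d, -, hd₁, hd₂⟩ := (hG a b).some.exists_boundary_dart C ha hb
  have hdv : d.snd = v := by
    by_contra hdv
    exact hd₂ (hC _ hd₁ _ d.adj hdv)
  exact ⟨d.fst, hd₁, hdv ▸ d.adj.symm⟩

lemma SimpleGraph.Preconnected.induce_compl_singleton [Fintype V] {v : V} (hG : G.Preconnected)
    (h : ∀ C : Finset V, v ∉ C → (∀ x ∈ C, ∀ y, G.Adj x y → y ≠ v → y ∈ C) →
      ∀ u ∈ C, ∀ w ∉ C, G.Adj v u → G.Adj v w → False) :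
    (G.induce {v}ᶜ).Preconnected := by
  classical
  intro a b
  by_contra hab
  set C : Finset V := {x | ∃ hx : x ≠ v, (G.induce {v}ᶜ).Reachable a ⟨x, hx⟩} with hCdef
  have hC : ∀ x ∈ C, ∀ y, G.Adj x y → y ≠ v → y ∈ C := by
    intro x hx y hxy hyv
    simp only [hCdef, mem_filter, mem_univ, true_and] at hx ⊢
    obtain ⟨hxv, hax⟩ := hx
    exact ⟨hyv, hax.trans (induce_adj.2 hxy : (G.induce {v}ᶜ).Adj ⟨x, hxv⟩ ⟨y, hyv⟩).reachable⟩
  have haC : (a : V) ∈ C := mem_filter.2 ⟨mem_univ _, a.2, .rfl⟩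
  have hbC : (b : V) ∉ C := fun hb => hab (mem_filter.1 hb).2.2
  obtain ⟨u, huC, hvu⟩ := hG.exists_adj_of_closed (C := C) hC haC hbC
  obtain ⟨w, ⟨hwC, -⟩, hvw⟩ := hG.exists_adj_of_closed (C := {x | x ∉ C ∧ x ≠ v})
    (fun x hx y hxy hyv => ⟨fun hy => hx.1 (hC y hy x hxy.symm hx.2), hyv⟩)
    (a := b) ⟨hbC, b.2⟩ (fun ha => ha.1 haC)
  exact h C (by simp [hCdef]) hC u huC w hwC hvu hvw

end

/-- Every connected critical graph other than `K₁` and `K₂` is `2`-connected: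
it has at least `3` vertices and stays connected after deleting any single vertex. -/
theorem stmt_2 {V : Type*} [Fintype V] (G : SimpleGraph V)
    (hconn : G.Connected) (hcrit : IsCritical G)
    (hK1 : ¬ Nonempty (G ≃g (⊤ : SimpleGraph (Fin 1))))
    (hK2 : ¬ Nonempty (G ≃g (⊤ : SimpleGraph (Fin 2)))) :
    3 ≤ Fintype.card V ∧ ∀ v : V, (G.induce ({v}ᶜ : Set V)).Connected := by
  have hcard : 3 ≤ Fintype.card V := by
    have : Nonempty V := hconn.nonempty
    have := Fintype.card_pos (α := V)
    by_contra! h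
    obtain h1 | h2 : Fintype.card V = 1 ∨ Fintype.card V = 2 := by omega
    · exact hK1 (hconn.nonempty_iso_top_of_card_eq h1 (by norm_num))
    · exact hK2 (hconn.nonempty_iso_top_of_card_eq h2 le_rfl)
  refine ⟨hcard, fun v => ?_⟩
  have : Nonempty ({v}ᶜ : Set V) := by
    have : Nontrivial V := Fintype.one_lt_card_iff_nontrivial.1 (by omega)
    obtain ⟨x, hx⟩ := exists_ne v
    exact ⟨⟨x, hx⟩⟩
  exact ⟨hconn.preconnected.induce_compl_singleton fun _ hvC hC _ huC _ hwC hvu hvw =>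
    hcrit.neighbors_not_separated hC hvC huC hwC hvu hvw⟩
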